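/- arXiv:2203.00208 — 3 statements merged into one kernel-verified Lean document; each statement's English description precedes it below -/
import Mathlib

section
/- Let $H, H' \in M_n(\mathbb{Z})$ be skew-symmetric matrices. If there exists $P \in GL_n(\mathbb{Z})$ with $P^T H P = H'$, then the quasi Laurent polynomial algebras $\mathcal{L}_q[H]$ and $\mathcal{L}_q[H']$ are isomorphic as $\mathbb{C}$-algebras; explicitly, writing $P = (\alpha_1, \dots, \alpha_n)$ in columns, the map sending the $i$-th generator of $\mathcal{L}_q[H']$ to the Laurent monomial $x^{\alpha_i}$ in $\mathcal{L}_q[H]$ extends to an algebra isomorphism. -/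
/-!
The map `x'^β ↦ r^{g β} x^{Pβ}` is a linear isomorphism for any `g`, and it is multiplicative
exactly when `g (α + β) = g α + g β + 2 f(α, β)` with `r² = q`, where
`f(α, β) = σ_H(Pα, Pβ) - σ_{H'}(α, β)` compares the reordering exponents. This `f` is biadditive,
and it is symmetric since both `σ`'s antisymmetrize to the bilinear form of `Pᵀ H P = H'`; so
`g α = f(α, α) - ∑ αᵢ f(eᵢ, eᵢ)` works, and vanishes on the generators.
-/

open Finset Matrix

/-- The reordering exponent: `x^α · x^β = q^(sigmaExp H α β) x^(α+β)` in the
quasi Laurent polynomial algebra `L_q[H]`. -/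
def sigmaExp {n : ℕ} (H : Matrix (Fin n) (Fin n) ℤ) (α β : Fin n → ℤ) : ℤ :=
  ∑ i : Fin n, ∑ j : Fin n, if j < i then α i * β j * H i j else 0

namespace sigmaExp

variable {n : ℕ} (H : Matrix (Fin n) (Fin n) ℤ)

lemma add_left (α α' β : Fin n → ℤ) :
    sigmaExp H (α + α') β = sigmaExp H α β + sigmaExp H α' β := by
  simp only [sigmaExp, ← sum_add_distrib]
  refine sum_congr rfl fun i _ => sum_congr rfl fun j _ => ?_
  simp only [Pi.add_apply]; split_ifs <;> ring

lemma sub_swap (hskew : Hᵀ = -H) (α β : Fin n → ℤ) :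
    sigmaExp H α β - sigmaExp H β α = α ⬝ᵥ H *ᵥ β := by
  have hH : ∀ i j, H j i = -H i j := fun i j => by simpa using congrFun₂ hskew i j
  rw [sigmaExp, sigmaExp, sum_comm (f := fun i j => if j < i then β i * α j * H i j else 0),
    ← sum_sub_distrib]
  simp only [dotProduct, mulVec, mul_sum, ← sum_sub_distrib]
  refine sum_congr rfl fun i _ => sum_congr rfl fun j _ => ?_
  rcases lt_trichotomy j i with h | rfl | h
  · simp [h, h.not_gt]; ring
  · have : H j j = 0 := by linarith [hH j j]
    simp [this]
  · simp [h, h.not_gt, hH j i]; ring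

end sigmaExp

lemma sigmaExp_mulVec_sub_sigmaExp_comm {n : ℕ} {H H' P : Matrix (Fin n) (Fin n) ℤ}
    (hskew : Hᵀ = -H) (hskew' : H'ᵀ = -H') (hcong : Pᵀ * H * P = H') (α β : Fin n → ℤ) :
    sigmaExp H (P *ᵥ α) (P *ᵥ β) - sigmaExp H' α β =
      sigmaExp H (P *ᵥ β) (P *ᵥ α) - sigmaExp H' β α := by
  have hform : (P *ᵥ α) ⬝ᵥ H *ᵥ (P *ᵥ β) = α ⬝ᵥ H' *ᵥ β := by
    rw [← hcong, ← mulVec_mulVec, ← mulVec_mulVec, dotProduct_mulVec α, vecMul_transpose]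
  have h := sigmaExp.sub_swap H hskew (P *ᵥ α) (P *ᵥ β)
  have h' := sigmaExp.sub_swap H' hskew' α β
  omega

lemma exists_quadratic_refinement_two_mul {ι : Type*} [Fintype ι] [DecidableEq ι]
    (f : (ι → ℤ) → (ι → ℤ) → ℤ) (hadd : ∀ α α' β, f (α + α') β = f α β + f α' β)
    (hcomm : ∀ α β, f α β = f β α) :
    ∃ g : (ι → ℤ) → ℤ, g 0 = 0 ∧ (∀ i, g (Pi.single i 1) = 0) ∧
      ∀ α β, g (α + β) = g α + g β + 2 * f α β := by
  have hadd' : ∀ α β β', f α (β + β') = f α β + f α β' := fun α β β' => by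
    rw [hcomm, hadd, hcomm β, hcomm β']
  have hzero : f 0 0 = 0 := by simpa using hadd 0 0 0
  refine ⟨fun α => f α α - ∑ i, α i * f (Pi.single i 1) (Pi.single i 1), ?_, fun i => ?_,
    fun α β => ?_⟩
  · simp [hzero]
  · simp [Pi.single_apply]
  · simp only [hadd, hadd', hcomm β α, Pi.add_apply, add_mul, sum_add_distrib]
    ring

lemma Module.Basis.exists_algEquiv_of_mul_eq_smul {K L L' ι ι' : Type*} [CommRing K]
    [Ring L] [Algebra K L] [Ring L'] [Algebra K L'] [AddZeroClass ι] [AddZeroClass ι']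
    (B : Module.Basis ι K L) (B' : Module.Basis ι' K L') (c : ι → ι → K) (c' : ι' → ι' → K)
    (hone : B 0 = 1) (hmul : ∀ α β, B α * B β = c α β • B (α + β))
    (hone' : B' 0 = 1) (hmul' : ∀ α β, B' α * B' β = c' α β • B' (α + β))
    (e : ι' ≃+ ι) (u : ι' → Kˣ) (hu0 : u 0 = 1)
    (hu : ∀ α β, c' α β * u (α + β) = u α * u β * c (e α) (e β)) :
    ∃ φ : L' ≃ₐ[K] L, ∀ α, φ (B' α) = (u α : K) • B (e α) := by
  let φ : L' ≃ₗ[K] L := B'.equiv ((B.reindex e.symm.toEquiv).unitsSMul u) (Equiv.refl _)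
  have hφ : ∀ α, φ (B' α) = (u α : K) • B (e α) := fun α => by
    simp [φ, Module.Basis.unitsSMul_apply, Units.smul_def]
  have hφ_one : φ 1 = 1 := by
    rw [← hone', hφ, hu0, map_zero, hone, Units.val_one, one_smul]
  have hφ_mul : (LinearMap.mul K L').compr₂ φ.toLinearMap =
      (LinearMap.mul K L ∘ₗ φ.toLinearMap).compl₂ φ.toLinearMap :=
    B'.ext fun α => B'.ext fun β => by
      show φ (B' α * B' β) = φ (B' α) * φ (B' β)
      rw [hmul', map_smul, hφ, hφ, hφ, smul_mul_smul_comm, hmul, map_add, smul_smul, smul_smul, hu]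
  exact ⟨AlgEquiv.ofLinearEquiv φ hφ_one (LinearMap.congr_fun₂ hφ_mul), hφ⟩

/-- if `P ∈ GL_n(ℤ)` and `Pᵀ H P = H'`, then `L_q[H'] ≅ L_q[H]`
as ℂ-algebras, via the map sending the `i`-th generator `x'_i` of `L_q[H']` to
the Laurent monomial `x^{α_i}` of `L_q[H]`, `α_i` the `i`-th column of `P`.
The algebras are presented by their bases of Laurent monomials. -/
theorem QLPA_iso_of_congruent (n : ℕ) (q : ℂ) (hq : q ≠ 0)
    (H H' : Matrix (Fin n) (Fin n) ℤ) (hskew : Hᵀ = -H) (hskew' : H'ᵀ = -H')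
    (P : Matrix (Fin n) (Fin n) ℤ) (hP : IsUnit P.det)
    (hcong : Pᵀ * H * P = H')
    (L L' : Type*) [Ring L] [Algebra ℂ L] [Ring L'] [Algebra ℂ L']
    (B : Module.Basis (Fin n → ℤ) ℂ L) (hone : B 0 = 1)
    (hmul : ∀ α β : Fin n → ℤ, B α * B β = q ^ sigmaExp H α β • B (α + β))
    (B' : Module.Basis (Fin n → ℤ) ℂ L') (hone' : B' 0 = 1)
    (hmul' : ∀ α β : Fin n → ℤ, B' α * B' β = q ^ sigmaExp H' α β • B' (α + β)) :
    ∃ φ : L' ≃ₐ[ℂ] L,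
      ∀ i : Fin n, φ (B' (Pi.single i 1)) = B (fun k => P k i) := by
  obtain ⟨g, hg0, hg_single, hg_add⟩ := exists_quadratic_refinement_two_mul
    (fun α β => sigmaExp H (P *ᵥ α) (P *ᵥ β) - sigmaExp H' α β)
    (fun α α' β => by simp only [mulVec_add, sigmaExp.add_left]; ring)
    (sigmaExp_mulVec_sub_sigmaExp_comm hskew hskew' hcong)
  -- `q ^ m = r ^ (2 * m)` absorbs the factor `2` of the refinement
  obtain ⟨r, hr⟩ := IsAlgClosed.exists_pow_nat_eq q two_pos
  have hr0 : r ≠ 0 := by rintro rfl; exact hq (by simp [← hr])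
  have hq_zpow (m : ℤ) : q ^ m = r ^ (2 * m) := by rw [← hr, _root_.zpow_mul, zpow_ofNat]
  let e := (P.toLinearEquiv' (P.invertibleOfIsUnitDet hP)).toAddEquiv
  have he (v : Fin n → ℤ) : e v = P *ᵥ v := rfl
  obtain ⟨φ, hφ⟩ := B.exists_algEquiv_of_mul_eq_smul B' _ _ hone hmul hone' hmul' e
    (fun β => Units.mk0 r hr0 ^ g β) (by simp [hg0]) fun α β => by
      simp only [Units.val_zpow_eq_zpow_val, Units.val_mk0, hq_zpow, ← zpow_add₀ hr0, hg_add, he]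
      congr 1
      ring
  refine ⟨φ, fun i => ?_⟩
  rw [hφ, hg_single, zpow_zero, Units.val_one, one_smul, he]
  congr 1
  ext k
  simp [mulVec_single]
end

section
/- Let $q \in \mathbb{C}^*$ not be a root of unity and let $\mathcal{A}_q(2)$ be the quantum plane ($xy = qyx$). Suppose $M$ is a simple $\mathcal{A}_q(2)$-module on which $xy$ acts locally nilpotently (equivalently, $M$ contains a cyclic eigenvector of $K = x^a y^b$ with eigenvalue $0$ for some positive integers $a, b$). Then $\dim_\mathbb{C} M = 1$, and the action is given by $x \mapsto \mu_1$, $y \mapsto \mu_2$ with $\mu_1 \mu_2 = 0$. -/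
open Polynomial

private lemma nil_to_ker {M : Type*} [AddCommGroup M] [Module ℂ M]
    (T : M →ₗ[ℂ] M) : ∀ (k : ℕ) (v : M), v ≠ 0 → (T ^ k) v = 0 →
      ∃ w : M, w ≠ 0 ∧ T w = 0 := by
  intro k
  induction k with
  | zero => intro v hv h; simp at h; exact absurd h hv
  | succ k ih =>
    intro v hv h
    by_cases hTv : T v = 0
    · exact ⟨v, hv, hTv⟩
    · refine ih (T v) hTv ?_
      rw [pow_succ, Module.End.mul_apply] at h
      exact h

private lemma exists_eigenvector {M : Type*} [AddCommGroup M] [Module ℂ M]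
    (Z : M →ₗ[ℂ] M) :
    ∀ (n : ℕ) (p : ℂ[X]), p.natDegree ≤ n → p ≠ 0 →
      ∀ v : M, v ≠ 0 → Polynomial.aeval Z p v = 0 →
      ∃ (μ : ℂ) (w : M), w ≠ 0 ∧ Z w = μ • w := by
  intro n
  induction n with
  | zero =>
    intro p hdeg hp v hv hpv
    have hc : p = C (p.coeff 0) := Polynomial.eq_C_of_natDegree_eq_zero (Nat.le_zero.mp hdeg)
    rw [hc, Polynomial.aeval_C, Module.algebraMap_end_apply] at hpv
    have hne : p.coeff 0 ≠ 0 := fun h => hp (by rw [hc, h, map_zero])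
    exact absurd hpv (by simp [smul_eq_zero, hne, hv])
  | succ n ih =>
    intro p hdeg hp v hv hpv
    by_cases hd : p.natDegree = 0
    · have hc : p = C (p.coeff 0) := Polynomial.eq_C_of_natDegree_eq_zero hd
      rw [hc, Polynomial.aeval_C, Module.algebraMap_end_apply] at hpv
      have hne : p.coeff 0 ≠ 0 := fun h => hp (by rw [hc, h, map_zero])
      exact absurd hpv (by simp [smul_eq_zero, hne, hv])
    · have hdeg0 : p.degree ≠ 0 := by
        intro h
        exact hd (Polynomial.natDegree_eq_zero_iff_degree_le_zero.mpr h.le)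
      obtain ⟨a, ha⟩ := IsAlgClosed.exists_root p hdeg0
      obtain ⟨r, hr⟩ := Polynomial.dvd_iff_isRoot.mpr ha
      have hrne : r ≠ 0 := by
        rintro rfl; rw [mul_zero] at hr; exact hp hr
      have hdegr : r.natDegree ≤ n := by
        have : p.natDegree = 1 + r.natDegree := by
          rw [hr, Polynomial.natDegree_mul (Polynomial.X_sub_C_ne_zero a) hrne,
            Polynomial.natDegree_X_sub_C]
        omega
      rw [hr, map_mul, Module.End.mul_apply] at hpv
      set w := Polynomial.aeval Z r v with hw
      by_cases hwz : w = 0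
      · exact ih r hdegr hrne v hv hwz
      · refine ⟨a, w, hwz, ?_⟩
        rw [map_sub, Polynomial.aeval_X, Polynomial.aeval_C] at hpv
        rw [LinearMap.sub_apply, Module.algebraMap_end_apply, sub_eq_zero] at hpv
        exact hpv

private lemma scalar_of_simple {M : Type*} [AddCommGroup M] [Module ℂ M] [Nontrivial M]
    (Z : M →ₗ[ℂ] M)
    (hs : ∀ W : Submodule ℂ M, (∀ v ∈ W, Z v ∈ W) → W = ⊥ ∨ W = ⊤) :
    ∃ μ : ℂ, ∀ v : M, Z v = μ • v := by
  obtain ⟨v, hv⟩ := exists_ne (0 : M)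
  -- Step 1: find a nonzero polynomial annihilating v
  have hann : ∃ p : ℂ[X], p ≠ 0 ∧ Polynomial.aeval Z p v = 0 := by
    let φ : ℂ[X] →ₗ[ℂ] M :=
      { toFun := fun p => Polynomial.aeval Z (Polynomial.X * p) v
        map_add' := by
          intro a b
          show Polynomial.aeval Z (Polynomial.X * (a + b)) v = _
          rw [mul_add, map_add, LinearMap.add_apply]
        map_smul' := by
          intro c a
          show Polynomial.aeval Z (Polynomial.X * (c • a)) v = _
          rw [mul_smul_comm, map_smul, LinearMap.smul_apply, RingHom.id_apply] }
    have hφ : ∀ p : ℂ[X], φ p = Polynomial.aeval Z (Polynomial.X * p) v := fun _ => rfl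
    have hinv : ∀ w ∈ LinearMap.range φ, Z w ∈ LinearMap.range φ := by
      rintro w ⟨p, rfl⟩
      refine ⟨Polynomial.X * p, ?_⟩
      rw [hφ, hφ]
      have : Z (Polynomial.aeval Z (Polynomial.X * p) v)
          = (Polynomial.aeval Z (Polynomial.X : ℂ[X]) * Polynomial.aeval Z (Polynomial.X * p)) v := by
        rw [Polynomial.aeval_X, Module.End.mul_apply]
      rw [this, ← map_mul (Polynomial.aeval Z) Polynomial.X (Polynomial.X * p), ← mul_assoc]
    rcases hs (LinearMap.range φ) hinv with hbot | htop
    · refine ⟨Polynomial.X, Polynomial.X_ne_zero, ?_⟩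
      have : φ 1 = 0 := by
        have : φ 1 ∈ (⊥ : Submodule ℂ M) := hbot ▸ LinearMap.mem_range_self φ 1
        simpa using this
      rw [hφ, mul_one] at this
      exact this
    · have hvmem : v ∈ LinearMap.range φ := htop ▸ Submodule.mem_top
      obtain ⟨p, hp⟩ := hvmem
      refine ⟨1 - Polynomial.X * p, ?_, ?_⟩
      · intro h
        have h0 : (1 - Polynomial.X * p).coeff 0 = 0 := by rw [h]; simp
        rw [Polynomial.coeff_sub, Polynomial.coeff_one, Polynomial.mul_coeff_zero,
          Polynomial.coeff_X_zero, zero_mul, sub_zero] at h0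
        simp at h0
      · rw [map_sub, map_one, LinearMap.sub_apply, Module.End.one_apply]
        rw [hφ] at hp
        rw [hp, sub_self]
  obtain ⟨p, hp, hpv⟩ := hann
  obtain ⟨μ, w, hw, hZw⟩ := exists_eigenvector Z p.natDegree p le_rfl hp v hv hpv
  -- Step 2: eigenspace is invariant, hence everything
  refine ⟨μ, ?_⟩
  have hker : ∀ u, u ∈ LinearMap.ker (Z - μ • LinearMap.id) ↔ Z u = μ • u := by
    intro u
    rw [LinearMap.mem_ker, LinearMap.sub_apply, LinearMap.smul_apply, LinearMap.id_apply,
      sub_eq_zero]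
  have hinv : ∀ u ∈ LinearMap.ker (Z - μ • LinearMap.id),
      Z u ∈ LinearMap.ker (Z - μ • LinearMap.id) := by
    intro u hu
    rw [hker] at hu ⊢
    rw [hu, map_smul, hu]
  rcases hs _ hinv with hbot | htop
  · exfalso
    have : w ∈ (⊥ : Submodule ℂ M) := hbot ▸ (hker w).mpr hZw
    exact hw (by simpa using this)
  · intro u
    exact (hker u).mp (htop ▸ Submodule.mem_top)

/-- for `q` not a root of unity, a simple `A_q(2)`-module
(a nonzero ℂ-vector space `M` with operators `X, Y` satisfying `X∘Y = q (Y∘X)`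
and no proper nonzero invariant subspaces) on which `xy` acts locally
nilpotently is one-dimensional, with `x, y` acting by scalars `μ₁, μ₂`
satisfying `μ₁ μ₂ = 0`. -/
theorem simple_locally_nilpotent_module_one_dim (q : ℂ) (hq : q ≠ 0)
    (hroot : ∀ k : ℕ, q ^ (k + 1) ≠ 1)
    (M : Type*) [AddCommGroup M] [Module ℂ M] [Nontrivial M]
    (X Y : M →ₗ[ℂ] M)
    (hrel : X ∘ₗ Y = q • (Y ∘ₗ X))
    (hsimple : ∀ W : Submodule ℂ M,
      (∀ v ∈ W, X v ∈ W) → (∀ v ∈ W, Y v ∈ W) → W = ⊥ ∨ W = ⊤)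
    (hnil : ∀ v : M, ∃ k : ℕ, ((X ∘ₗ Y) ^ k) v = 0) :
    Module.finrank ℂ M = 1 ∧
      ∃ μ₁ μ₂ : ℂ, μ₁ * μ₂ = 0 ∧ (∀ v : M, X v = μ₁ • v) ∧ (∀ v : M, Y v = μ₂ • v) := by
  have hrel' : ∀ v : M, X (Y v) = q • Y (X v) := by
    intro v
    have := congrFun (congrArg DFunLike.coe hrel) v
    simpa using this
  -- Step 1: X ∘ Y = 0
  have hXY : ∀ v : M, X (Y v) = 0 := by
    set T := X ∘ₗ Y with hT
    have hTapp : ∀ v : M, T v = X (Y v) := fun _ => rfl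
    have hinvX : ∀ v ∈ LinearMap.ker T, X v ∈ LinearMap.ker T := by
      intro v hv
      rw [LinearMap.mem_ker] at hv ⊢
      have h1 : Y (X v) = q⁻¹ • X (Y v) := by
        rw [hrel' v, smul_smul, inv_mul_cancel₀ hq, one_smul]
      rw [hTapp] at hv ⊢
      rw [h1, hv, smul_zero, map_zero]
    have hinvY : ∀ v ∈ LinearMap.ker T, Y v ∈ LinearMap.ker T := by
      intro v hv
      rw [LinearMap.mem_ker] at hv ⊢
      rw [hTapp] at hv ⊢
      rw [hrel' (Y v), hv, map_zero, smul_zero]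
    rcases hsimple (LinearMap.ker T) hinvX hinvY with hbot | htop
    · exfalso
      obtain ⟨v, hv⟩ := exists_ne (0 : M)
      obtain ⟨k, hk⟩ := hnil v
      obtain ⟨w, hw, hTw⟩ := nil_to_ker T k v hv hk
      have : w ∈ (⊥ : Submodule ℂ M) := hbot ▸ LinearMap.mem_ker.mpr hTw
      exact hw (by simpa using this)
    · intro v
      have : v ∈ LinearMap.ker T := htop ▸ Submodule.mem_top
      exact LinearMap.mem_ker.mp this
  -- Step 2: ker X invariant, so X = 0 or X injective (and then Y = 0)
  have hinvX : ∀ v ∈ LinearMap.ker X, X v ∈ LinearMap.ker X := by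
    intro v hv
    rw [LinearMap.mem_ker] at hv ⊢
    rw [hv, map_zero]
  have hinvY : ∀ v ∈ LinearMap.ker X, Y v ∈ LinearMap.ker X := by
    intro v _
    exact LinearMap.mem_ker.mpr (hXY v)
  have hcase : (∀ v : M, X v = 0) ∨ (∀ v : M, Y v = 0) := by
    rcases hsimple (LinearMap.ker X) hinvX hinvY with hbot | htop
    · right
      intro v
      have : X (Y v) = 0 := hXY v
      have : Y v ∈ LinearMap.ker X := LinearMap.mem_ker.mpr this
      rw [hbot] at this
      simpa using this
    · left
      intro v
      exact LinearMap.mem_ker.mp (htop ▸ Submodule.mem_top)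
  -- Step 3: the remaining operator is a scalar
  have hscalars : ∃ μ₁ μ₂ : ℂ, μ₁ * μ₂ = 0 ∧ (∀ v : M, X v = μ₁ • v) ∧
      (∀ v : M, Y v = μ₂ • v) := by
    rcases hcase with hX0 | hY0
    · obtain ⟨μ, hμ⟩ := scalar_of_simple Y (fun W hW =>
        hsimple W (fun v hv => by rw [hX0 v]; exact W.zero_mem) hW)
      exact ⟨0, μ, by ring, fun v => by rw [hX0 v, zero_smul], hμ⟩
    · obtain ⟨μ, hμ⟩ := scalar_of_simple X (fun W hW =>
        hsimple W hW (fun v hv => by rw [hY0 v]; exact W.zero_mem))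
      exact ⟨μ, 0, by ring, hμ, fun v => by rw [hY0 v, zero_smul]⟩
  obtain ⟨μ₁, μ₂, hμ, hX, hY⟩ := hscalars
  refine ⟨?_, μ₁, μ₂, hμ, hX, hY⟩
  -- Step 4: finrank = 1
  obtain ⟨v, hv⟩ := exists_ne (0 : M)
  have hspan : Submodule.span ℂ {v} = ⊤ := by
    rcases hsimple (Submodule.span ℂ {v})
      (fun u hu => by rw [hX u]; exact Submodule.smul_mem _ _ hu)
      (fun u hu => by rw [hY u]; exact Submodule.smul_mem _ _ hu) with hbot | htop
    · exfalso
      have : v ∈ (⊥ : Submodule ℂ M) := hbot ▸ Submodule.mem_span_singleton_self v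
      exact hv (by simpa using this)
    · exact htop
  rw [← finrank_top ℂ M, ← hspan]
  exact finrank_span_singleton hv
end

section
/- Let $q \in \mathbb{C}^*$ not be a root of unity, and let $a, b$ be coprime positive integers with associated $K = x^a y^b$, $\widehat{X} = x^{a-v}y^{b-u}$, $\widehat{Y} = x^v y^u$ (where $au - bv = 1$, $0 \le v \le a$, $0 \le u \le b$) in $\mathcal{A}_q(2)$. If $M$ is a simple $\mathcal{A}_q(2)$-module generated by an eigenvector $v_0$ of $K$ with nonzero eigenvalue $\lambda$, then the vectors $\{\widehat{X}^\ell v_0 \mid \ell \geq 0\} \cup \{\widehat{Y}^{\ell+1} v_0 \mid \ell \geq 0\}$ form a basis of $M$; in particular $K$ acts semisimply on $M$ with one-dimensional eigenspaces of eigenvalues $q^k \lambda$, $k \in \mathbb{Z}$. -/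
/-!
Write `K = X^a Y^b`, `X̂ = X^(a-v) Y^(b-u)` and `Ŷ = X^v Y^u`. A monomial `X^m Y^n` `q`-commutes
with `K` with exponent its weight `a n - b m`, so it multiplies `K`-eigenvalues by `q^(a n - b m)`;
`X̂` and `Ŷ` have weights `-1` and `1`, and since `Ŷ X̂` and `X̂ Ŷ` are nonzero multiples of `K`
neither kills a `K`-eigenvector with nonzero eigenvalue. So the family consists of eigenvectors of
`K` for the pairwise distinct eigenvalues `q^k λ` and is linearly independent.
For spanning: the vectors `X^m Y^n v₀` span an `X`, `Y`-stable nonzero submodule, hence all of `M`.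
As `a u - b v = 1`, two monomials of the same weight differ by a multiple of `(a, b)`, that is by a
power of `K`, so `X^m Y^n v₀` is a nonzero multiple of the member of the family of the same weight.
-/

open Submodule Module.End

section QuantumPlane

variable {R A : Type*} [CommSemiring R] [Semiring A] [Algebra R A] {q : R} {x y : A}

theorem mul_pow_eq_smul_pow_mul (h : x * y = q • (y * x)) (n : ℕ) :
    x * y ^ n = q ^ n • (y ^ n * x) := by
  induction n with
  | zero => simp
  | succ n ih =>
    rw [pow_succ, ← mul_assoc, ih, smul_mul_assoc, mul_assoc, h, mul_smul_comm, smul_smul,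
      ← mul_assoc, ← pow_succ, pow_succ q]

theorem pow_mul_pow_eq_smul_pow_mul_pow (h : x * y = q • (y * x)) (m n : ℕ) :
    x ^ m * y ^ n = q ^ (m * n) • (y ^ n * x ^ m) := by
  induction m with
  | zero => simp
  | succ m ih =>
    rw [pow_succ, mul_assoc, mul_pow_eq_smul_pow_mul h, mul_smul_comm, ← mul_assoc, ih,
      smul_mul_assoc, smul_smul, mul_assoc, ← pow_succ, ← pow_add, add_one_mul, add_comm]

theorem pow_add_mul_pow_add (h : x * y = q • (y * x)) (m n m' n' : ℕ) :
    x ^ (m + m') * y ^ (n + n') = q ^ (m' * n) • (x ^ m * y ^ n * (x ^ m' * y ^ n')) := by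
  rw [pow_add, pow_add, mul_assoc, ← mul_assoc (x ^ m'), pow_mul_pow_eq_smul_pow_mul_pow h,
    smul_mul_assoc, mul_smul_comm, mul_assoc, mul_assoc]

theorem smul_mul_eq_smul_mul_swap (h : x * y = q • (y * x)) (m n m' n' : ℕ) :
    q ^ (m' * n) • (x ^ m * y ^ n * (x ^ m' * y ^ n')) =
      q ^ (m * n') • (x ^ m' * y ^ n' * (x ^ m * y ^ n)) := by
  rw [← pow_add_mul_pow_add h, ← pow_add_mul_pow_add h, add_comm m, add_comm n]

theorem smul_pow_mul_pow_pow (h : x * y = q • (y * x)) (s t ℓ : ℕ) :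
    q ^ (s * t * ℓ.choose 2) • (x ^ s * y ^ t) ^ ℓ = x ^ (ℓ * s) * y ^ (ℓ * t) := by
  induction ℓ with
  | zero => simp
  | succ ℓ ih =>
    rw [add_one_mul, add_one_mul, pow_add_mul_pow_add h, ← ih, smul_mul_assoc, smul_smul,
      ← pow_add, ← pow_succ, Nat.choose_succ_succ', Nat.choose_one_right]
    ring_nf

end QuantumPlane

theorem pow_mul_pow_mul_comm_zpow {𝕜 A : Type*} [Field 𝕜] [Semiring A] [Algebra 𝕜 A] {q : 𝕜}
    {x y : A} (hq : q ≠ 0) (h : x * y = q • (y * x)) (a b m n : ℕ) :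
    x ^ a * y ^ b * (x ^ m * y ^ n) =
      q ^ ((a : ℤ) * n - b * m) • (x ^ m * y ^ n * (x ^ a * y ^ b)) := by
  rw [zpow_sub₀ hq, div_eq_inv_mul, mul_smul, ← Nat.cast_mul, ← Nat.cast_mul, zpow_natCast,
    zpow_natCast, ← smul_mul_eq_smul_mul_swap h, mul_comm b m, inv_smul_smul₀ (pow_ne_zero _ hq)]

theorem IsCoprime.exists_eq_add_mul_of_mul_sub_eq {R : Type*} [CommRing R] {a b m n m' n' : R}
    (hab : IsCoprime a b) (h : a * n - b * m = a * n' - b * m') :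
    ∃ t, m' = m + t * a ∧ n' = n + t * b := by
  obtain ⟨α, β, hαβ⟩ := hab
  exact ⟨α * (m' - m) + β * (n' - n), by linear_combination (m - m') * hαβ + β * h,
    by linear_combination (n - n') * hαβ - α * h⟩

theorem zpow_injective_of_pow_succ_ne_one {G₀ : Type*} [GroupWithZero G₀] {q : G₀} (hq : q ≠ 0)
    (hroot : ∀ k : ℕ, q ^ (k + 1) ≠ 1) : Function.Injective fun z : ℤ => q ^ z := by
  have hfin : ¬IsOfFinOrder (Units.mk0 q hq) := by
    rw [← Units.isOfFinOrder_val, isOfFinOrder_iff_pow_eq_one]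
    rintro ⟨n, hn, hqn⟩
    obtain ⟨k, rfl⟩ := Nat.exists_eq_add_one_of_ne_zero hn.ne'
    exact hroot k hqn
  intro z w hzw
  exact injective_zpow_iff_not_isOfFinOrder.mpr hfin (Units.ext (by simpa using hzw))

namespace Module.End

theorem ker_le_ker_of_eq_smul_mul {R M : Type*} [CommSemiring R] [AddCommMonoid M] [Module R M]
    {K N N' : End R M} {c : R} (h : K = c • (N' * N)) :
    LinearMap.ker N ≤ LinearMap.ker K :=
  fun w hw => by simp_all

variable {𝕜 M : Type*} [Field 𝕜] [AddCommGroup M] [Module 𝕜 M]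

theorem HasEigenvector.pow_apply_of_mul_eq_smul_mul {K N : End 𝕜 M} {c μ : 𝕜} {w : M}
    (hw : K.HasEigenvector μ w) (hμ : μ ≠ 0) (hc : c ≠ 0) (hKN : K * N = c • (N * K))
    (hker : LinearMap.ker N ≤ LinearMap.ker K) (ℓ : ℕ) :
    K.HasEigenvector (c ^ ℓ * μ) ((N ^ ℓ) w) := by
  induction ℓ with
  | zero => simpa using hw
  | succ ℓ ih =>
    have hKNw : K (N ((N ^ ℓ) w)) = (c ^ (ℓ + 1) * μ) • N ((N ^ ℓ) w) := by
      rw [← mul_apply, hKN, LinearMap.smul_apply, mul_apply, ih.apply_eq_smul, map_smul,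
        smul_smul, pow_succ', mul_assoc]
    rw [pow_succ' N, mul_apply]
    refine hasEigenvector_iff.mpr ⟨mem_eigenspace_iff.mpr hKNw, fun h0 => ih.2 ?_⟩
    have hK0 : K ((N ^ ℓ) w) = 0 := hker h0
    rw [ih.apply_eq_smul, smul_eq_zero] at hK0
    exact hK0.resolve_left (mul_ne_zero (pow_ne_zero _ hc) hμ)

end Module.End

section Monomials

variable {𝕜 M : Type*} [Field 𝕜] [AddCommGroup M] [Module 𝕜 M] {q : 𝕜} {X Y : Module.End 𝕜 M}

def monomialSpan (X Y : Module.End 𝕜 M) (v₀ : M) : Submodule 𝕜 M :=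
  span 𝕜 (Set.range fun p : ℕ × ℕ => (X ^ p.1 * Y ^ p.2) v₀)

theorem monomial_apply_mem_monomialSpan (v₀ : M) (m n : ℕ) :
    (X ^ m * Y ^ n) v₀ ∈ monomialSpan X Y v₀ :=
  subset_span ⟨(m, n), rfl⟩

theorem self_mem_monomialSpan (v₀ : M) : v₀ ∈ monomialSpan X Y v₀ := by
  simpa using monomial_apply_mem_monomialSpan (X := X) (Y := Y) v₀ 0 0

theorem monomialSpan_le_comap_left (v₀ : M) :
    monomialSpan X Y v₀ ≤ (monomialSpan X Y v₀).comap X := by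
  refine span_le.mpr ?_
  rintro _ ⟨⟨m, n⟩, rfl⟩
  simpa [← Module.End.mul_apply, ← mul_assoc, ← pow_succ'] using
    monomial_apply_mem_monomialSpan (X := X) (Y := Y) v₀ (m + 1) n

theorem monomialSpan_le_comap_right (hq : q ≠ 0) (hrel : X * Y = q • (Y * X)) (v₀ : M) :
    monomialSpan X Y v₀ ≤ (monomialSpan X Y v₀).comap Y := by
  refine span_le.mpr ?_
  rintro _ ⟨⟨m, n⟩, rfl⟩
  have hYX : Y * X ^ m = (q ^ m)⁻¹ • (X ^ m * Y) := by
    rw [← pow_one Y, pow_mul_pow_eq_smul_pow_mul_pow hrel, mul_one,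
      inv_smul_smul₀ (pow_ne_zero _ hq)]
  have hY : Y ((X ^ m * Y ^ n) v₀) = (q ^ m)⁻¹ • (X ^ m * Y ^ (n + 1)) v₀ := by
    rw [← Module.End.mul_apply, ← mul_assoc, hYX, smul_mul_assoc, mul_assoc, ← pow_succ']
    rfl
  rw [SetLike.mem_coe, mem_comap, hY]
  exact smul_mem _ _ (monomial_apply_mem_monomialSpan v₀ m (n + 1))

theorem span_singleton_pow_monomial_apply (hq : q ≠ 0) (hrel : X * Y = q • (Y * X))
    (v₀ : M) (s t ℓ : ℕ) : 𝕜 ∙ ((X ^ s * Y ^ t) ^ ℓ) v₀ = 𝕜 ∙ (X ^ (ℓ * s) * Y ^ (ℓ * t)) v₀ := by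
  rw [← smul_pow_mul_pow_pow hrel, LinearMap.smul_apply,
    span_singleton_smul_eq (pow_ne_zero _ hq).isUnit]

variable {a b : ℕ} {lam : 𝕜} {v₀ : M}

theorem span_singleton_monomial_add_mul_apply (hq : q ≠ 0) (hrel : X * Y = q • (Y * X))
    (hlam : lam ≠ 0) (hK : (X ^ a * Y ^ b) v₀ = lam • v₀) (m n t : ℕ) :
    𝕜 ∙ (X ^ (m + t * a) * Y ^ (n + t * b)) v₀ = 𝕜 ∙ (X ^ m * Y ^ n) v₀ := by
  induction t with
  | zero => simp
  | succ t ih =>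
    have hstep : (X ^ (m + t * a + a) * Y ^ (n + t * b + b)) v₀ =
        (q ^ (a * (n + t * b)) * lam) • (X ^ (m + t * a) * Y ^ (n + t * b)) v₀ := by
      rw [pow_add_mul_pow_add hrel, LinearMap.smul_apply, Module.End.mul_apply, hK, map_smul,
        smul_smul]
    rw [add_one_mul, ← add_assoc, add_one_mul, ← add_assoc, hstep,
      span_singleton_smul_eq (mul_ne_zero (pow_ne_zero _ hq) hlam).isUnit, ih]

theorem span_singleton_monomial_apply_eq_of_weight_eq (hq : q ≠ 0) (hrel : X * Y = q • (Y * X))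
    (hlam : lam ≠ 0) (hK : (X ^ a * Y ^ b) v₀ = lam • v₀) (hab : IsCoprime (a : ℤ) b)
    {m n m' n' : ℕ} (h : (a : ℤ) * n - b * m = a * n' - b * m') :
    𝕜 ∙ (X ^ m * Y ^ n) v₀ = 𝕜 ∙ (X ^ m' * Y ^ n') v₀ := by
  obtain ⟨t, hm, hn⟩ := hab.exists_eq_add_mul_of_mul_sub_eq h
  rcases le_total 0 t with ht | ht
  · lift t to ℕ using ht
    have hm' : m' = m + t * a := by exact_mod_cast hm
    have hn' : n' = n + t * b := by exact_mod_cast hn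
    rw [hm', hn', span_singleton_monomial_add_mul_apply hq hrel hlam hK]
  · obtain ⟨s, rfl⟩ : ∃ s : ℕ, t = -s := ⟨t.natAbs, by omega⟩
    have hm' : m = m' + s * a := by linarith
    have hn' : n = n' + s * b := by linarith
    rw [hm', hn', span_singleton_monomial_add_mul_apply hq hrel hlam hK]

end Monomials

section Ladder

variable {𝕜 M : Type*} [Field 𝕜] [AddCommGroup M] [Module 𝕜 M]

def ladderFamily (Xh Yh : Module.End 𝕜 M) (v₀ : M) : ℕ ⊕ ℕ → M :=
  Sum.elim (fun ℓ => (Xh ^ ℓ) v₀) (fun ℓ => (Yh ^ (ℓ + 1)) v₀)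

def ladderExponent : ℕ ⊕ ℕ → ℤ :=
  Sum.elim (fun ℓ => -(ℓ : ℤ)) (fun ℓ => (ℓ : ℤ) + 1)

theorem ladderExponent_injective : Function.Injective ladderExponent :=
  Function.Injective.sumElim (fun _ _ h => by simpa using h) (fun _ _ h => by simpa using h)
    (fun _ _ h => by omega)

variable {q lam : 𝕜} {K Xh Yh : Module.End 𝕜 M} {v₀ : M}

theorem hasEigenvector_ladderFamily (hq : q ≠ 0) (hlam : lam ≠ 0) (hv₀ : K.HasEigenvector lam v₀)
    (hKX : K * Xh = q⁻¹ • (Xh * K)) (hKY : K * Yh = q • (Yh * K))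
    (hkerX : LinearMap.ker Xh ≤ LinearMap.ker K) (hkerY : LinearMap.ker Yh ≤ LinearMap.ker K)
    (i : ℕ ⊕ ℕ) : K.HasEigenvector (q ^ ladderExponent i * lam) (ladderFamily Xh Yh v₀ i) := by
  rcases i with ℓ | ℓ
  · simpa [ladderFamily, ladderExponent, zpow_neg] using
      hv₀.pow_apply_of_mul_eq_smul_mul hlam (inv_ne_zero hq) hKX hkerX ℓ
  · simpa [ladderFamily, ladderExponent, ← zpow_natCast] using
      hv₀.pow_apply_of_mul_eq_smul_mul hlam hq hKY hkerY (ℓ + 1)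

theorem linearIndependent_ladderFamily (hq : q ≠ 0) (hroot : ∀ k : ℕ, q ^ (k + 1) ≠ 1)
    (hlam : lam ≠ 0) (hv₀ : K.HasEigenvector lam v₀)
    (hKX : K * Xh = q⁻¹ • (Xh * K)) (hKY : K * Yh = q • (Yh * K))
    (hkerX : LinearMap.ker Xh ≤ LinearMap.ker K) (hkerY : LinearMap.ker Yh ≤ LinearMap.ker K) :
    LinearIndependent 𝕜 (ladderFamily Xh Yh v₀) :=
  K.eigenvectors_linearIndependent' _
    ((mul_left_injective₀ hlam).comp
      ((zpow_injective_of_pow_succ_ne_one hq hroot).comp ladderExponent_injective)) _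
    (hasEigenvector_ladderFamily hq hlam hv₀ hKX hKY hkerX hkerY)

end Ladder

section LadderSpan

variable {𝕜 M : Type*} [Field 𝕜] [AddCommGroup M] [Module 𝕜 M] {q : 𝕜} {X Y : Module.End 𝕜 M}

theorem ker_monomial_le_ker_monomial (hrel : X * Y = q • (Y * X)) {m n a b : ℕ} (hm : m ≤ a)
    (hn : n ≤ b) : LinearMap.ker (X ^ m * Y ^ n) ≤ LinearMap.ker (X ^ a * Y ^ b) := by
  refine Module.End.ker_le_ker_of_eq_smul_mul (N' := X ^ (a - m) * Y ^ (b - n))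
    (c := q ^ (m * (b - n))) ?_
  rw [← pow_add_mul_pow_add hrel, Nat.sub_add_cancel hm, Nat.sub_add_cancel hn]

variable {a b u v : ℕ}

theorem weight_sub_sub_eq_neg_one (huv : (a : ℤ) * u - b * v = 1) (hv : v ≤ a) (hu : u ≤ b) :
    (a : ℤ) * ↑(b - u) - b * ↑(a - v) = -1 := by
  push_cast [hv, hu]
  linear_combination -huv

theorem monomialSpan_le_span_ladderFamily {lam : 𝕜} {v₀ : M} (hq : q ≠ 0)
    (hrel : X * Y = q • (Y * X)) (hlam : lam ≠ 0) (hK : (X ^ a * Y ^ b) v₀ = lam • v₀)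
    (huv : (a : ℤ) * u - b * v = 1) (hv : v ≤ a) (hu : u ≤ b) :
    monomialSpan X Y v₀ ≤
      span 𝕜 (Set.range (ladderFamily (X ^ (a - v) * Y ^ (b - u)) (X ^ v * Y ^ u) v₀)) := by
  have hab : IsCoprime (a : ℤ) b := ⟨u, -v, by linear_combination huv⟩
  refine span_le.mpr ?_
  rintro _ ⟨⟨m, n⟩, rfl⟩
  suffices ∃ i, 𝕜 ∙ (X ^ m * Y ^ n) v₀ =
      𝕜 ∙ ladderFamily (X ^ (a - v) * Y ^ (b - u)) (X ^ v * Y ^ u) v₀ i by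
    obtain ⟨i, hi⟩ := this
    exact span_mono (Set.singleton_subset_iff.mpr (Set.mem_range_self i))
      (hi ▸ mem_span_singleton_self _)
  rcases le_or_gt ((a : ℤ) * n - b * m) 0 with hd | hd
  · obtain ⟨k, hk⟩ : ∃ k : ℕ, (a : ℤ) * n - b * m = -k :=
      ⟨((a : ℤ) * n - b * m).natAbs, by omega⟩
    refine ⟨.inl k, ?_⟩
    rw [ladderFamily, Sum.elim_inl, span_singleton_pow_monomial_apply hq hrel]
    apply span_singleton_monomial_apply_eq_of_weight_eq hq hrel hlam hK hab
    push_cast [hk, hv, hu]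
    linear_combination k * huv
  · obtain ⟨k, hk⟩ : ∃ k : ℕ, (a : ℤ) * n - b * m = k + 1 :=
      ⟨((a : ℤ) * n - b * m).natAbs - 1, by omega⟩
    refine ⟨.inr k, ?_⟩
    rw [ladderFamily, Sum.elim_inr, span_singleton_pow_monomial_apply hq hrel]
    apply span_singleton_monomial_apply_eq_of_weight_eq hq hrel hlam hK hab
    push_cast [hk]
    linear_combination -(k + 1) * huv

end LadderSpan

theorem simple_module_basis_of_K_eigenvector_general (q : ℂ) (hq : q ≠ 0)
    (hroot : ∀ k : ℕ, q ^ (k + 1) ≠ 1)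
    (a b u v : ℕ)
    (huv : (a : ℤ) * u - (b : ℤ) * v = 1) (hv : v ≤ a) (hu : u ≤ b)
    (M : Type*) [AddCommGroup M] [Module ℂ M]
    (X Y : M →ₗ[ℂ] M) (hrel : X ∘ₗ Y = q • (Y ∘ₗ X))
    (hsimple : ∀ W : Submodule ℂ M,
      (∀ w ∈ W, X w ∈ W) → (∀ w ∈ W, Y w ∈ W) → W = ⊥ ∨ W = ⊤)
    (v₀ : M) (hv₀ : v₀ ≠ 0) (lam : ℂ) (hlam : lam ≠ 0)
    (hK : ((X ^ a) ∘ₗ (Y ^ b)) v₀ = lam • v₀) :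
    ∃ Bs : Module.Basis (ℕ ⊕ ℕ) ℂ M,
      (∀ ℓ : ℕ, Bs (Sum.inl ℓ) = (((X ^ (a - v)) ∘ₗ (Y ^ (b - u))) ^ ℓ) v₀) ∧
      (∀ ℓ : ℕ, Bs (Sum.inr ℓ) = (((X ^ v) ∘ₗ (Y ^ u)) ^ (ℓ + 1)) v₀) ∧
      (∀ ℓ : ℕ, ((X ^ a) ∘ₗ (Y ^ b)) (Bs (Sum.inl ℓ))
          = (q ^ (-(ℓ : ℤ)) * lam) • Bs (Sum.inl ℓ)) ∧
      (∀ ℓ : ℕ, ((X ^ a) ∘ₗ (Y ^ b)) (Bs (Sum.inr ℓ))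
          = (q ^ ((ℓ : ℤ) + 1) * lam) • Bs (Sum.inr ℓ)) := by
  replace hrel : X * Y = q • (Y * X) := hrel
  have hv₀K : HasEigenvector (X ^ a * Y ^ b) lam v₀ :=
    hasEigenvector_iff.mpr ⟨mem_eigenspace_iff.mpr hK, hv₀⟩
  have hKX : X ^ a * Y ^ b * (X ^ (a - v) * Y ^ (b - u)) =
      q⁻¹ • (X ^ (a - v) * Y ^ (b - u) * (X ^ a * Y ^ b)) := by
    rw [pow_mul_pow_mul_comm_zpow hq hrel, weight_sub_sub_eq_neg_one huv hv hu, zpow_neg_one]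
  have hKY : X ^ a * Y ^ b * (X ^ v * Y ^ u) = q • (X ^ v * Y ^ u * (X ^ a * Y ^ b)) := by
    rw [pow_mul_pow_mul_comm_zpow hq hrel, huv, zpow_one]
  have hkerX := ker_monomial_le_ker_monomial hrel (Nat.sub_le a v) (Nat.sub_le b u)
  have hkerY := ker_monomial_le_ker_monomial hrel hv hu
  have heig := hasEigenvector_ladderFamily hq hlam hv₀K hKX hKY hkerX hkerY
  have hli := linearIndependent_ladderFamily hq hroot hlam hv₀K hKX hKY hkerX hkerY
  have htop : monomialSpan X Y v₀ = ⊤ :=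
    (hsimple (monomialSpan X Y v₀) (fun _ hw => monomialSpan_le_comap_left v₀ hw)
      (fun _ hw => monomialSpan_le_comap_right hq hrel v₀ hw)).resolve_left
      fun hbot => hv₀ (by simpa [hbot] using self_mem_monomialSpan (X := X) (Y := Y) v₀)
  refine ⟨.mk hli (htop ▸ monomialSpan_le_span_ladderFamily hq hrel hlam hK huv hv hu),
    fun ℓ => ?_, fun ℓ => ?_, fun ℓ => ?_, fun ℓ => ?_⟩ <;> rw [Module.Basis.mk_apply]
  · rfl
  · rfl
  · simpa [ladderExponent] using (heig (.inl ℓ)).apply_eq_smul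
  · simpa [ladderExponent] using (heig (.inr ℓ)).apply_eq_smul

/-- for `q` not a root of unity and coprime positive `a, b`
with `au - bv = 1`, `0 ≤ v ≤ a`, `0 ≤ u ≤ b`, any simple `A_q(2)`-module `M`
generated by an eigenvector `v₀` of `K = x^a y^b` with nonzero eigenvalue `λ`
has basis `{X̂^ℓ v₀, Ŷ^(ℓ+1) v₀ | ℓ ≥ 0}` (where `X̂ = x^(a-v) y^(b-u)`,
`Ŷ = x^v y^u`); in particular `K` acts semisimply on this basis with the
pairwise distinct eigenvalues `q^(-ℓ) λ` and `q^(ℓ+1) λ`. -/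
theorem simple_module_basis_of_K_eigenvector (q : ℂ) (hq : q ≠ 0)
    (hroot : ∀ k : ℕ, q ^ (k + 1) ≠ 1)
    (a b u v : ℕ) (ha : 0 < a) (hb : 0 < b) (hcop : Nat.Coprime a b)
    (huv : (a : ℤ) * u - (b : ℤ) * v = 1) (hv : v ≤ a) (hu : u ≤ b)
    (M : Type*) [AddCommGroup M] [Module ℂ M]
    (X Y : M →ₗ[ℂ] M) (hrel : X ∘ₗ Y = q • (Y ∘ₗ X))
    (hsimple : ∀ W : Submodule ℂ M,
      (∀ w ∈ W, X w ∈ W) → (∀ w ∈ W, Y w ∈ W) → W = ⊥ ∨ W = ⊤)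
    (v₀ : M) (hv₀ : v₀ ≠ 0) (lam : ℂ) (hlam : lam ≠ 0)
    (hK : ((X ^ a) ∘ₗ (Y ^ b)) v₀ = lam • v₀) :
    ∃ Bs : Module.Basis (ℕ ⊕ ℕ) ℂ M,
      (∀ ℓ : ℕ, Bs (Sum.inl ℓ) = (((X ^ (a - v)) ∘ₗ (Y ^ (b - u))) ^ ℓ) v₀) ∧
      (∀ ℓ : ℕ, Bs (Sum.inr ℓ) = (((X ^ v) ∘ₗ (Y ^ u)) ^ (ℓ + 1)) v₀) ∧
      (∀ ℓ : ℕ, ((X ^ a) ∘ₗ (Y ^ b)) (Bs (Sum.inl ℓ))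
          = (q ^ (-(ℓ : ℤ)) * lam) • Bs (Sum.inl ℓ)) ∧
      (∀ ℓ : ℕ, ((X ^ a) ∘ₗ (Y ^ b)) (Bs (Sum.inr ℓ))
          = (q ^ ((ℓ : ℤ) + 1) * lam) • Bs (Sum.inr ℓ)) :=
  simple_module_basis_of_K_eigenvector_general q hq hroot a b u v huv hv hu M X Y hrel hsimple v₀
    hv₀ lam hlam hK
end
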